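/- Let Σ̂ be an n×n real symmetric positive definite matrix and δ ∈ ℝ. Let (λ₀, X₀) ∈ C_F and let (δλ, δX) ≠ (0, 0) with δλ ∈ ℝ and δX n×n real symmetric. Suppose there exists ε > 0 such that for all α with |α| < ε one has λ₀ + α·δλ > 0, Σ̂⁻¹ + (λ₀ + α·δλ)⁻¹(X₀ + α·δX) ≻ 0, and F(λ₀ + α·δλ, X₀ + α·δX) = F(λ₀, X₀). Then F(λ₀, X₀) = 0. -/

import Mathlib

/-!
Along the line put `λ(α) = l₀ + α δλ` and `P(α) = det(λ(α) Σ̂⁻¹ + X₀ + α δX)`, a polynomial in `α`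
equal to `λ(α)ⁿ det(Σ̂⁻¹ + λ(α)⁻¹ (X₀ + α δX))`. If `F` takes the constant value `K`, then
`log P = n log λ - K / λ + c`.

If `δλ ≠ 0`, reparametrise by `λ`: differentiating gives `λ² P' = (K + n λ) P` for a polynomial `P`,
and comparing coefficients from the bottom up forces `P = 0` unless `K = 0`.

If `δλ = 0`, then `det(M + α δX)` is constant with `M ≻ 0`. Conjugating by `M^{-1/2}` reduces this
to `det(1 + α C) = 1` with `C` symmetric, and a nonzero eigenvalue `t` of `C` would make
`1 - t⁻¹ C` singular; hence `δX = 0`, which is excluded.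
-/

/-- `dd M`: the diagonal matrix with the same diagonal as `M`. -/
def dd {n : ℕ} (M : Matrix (Fin n) (Fin n) ℝ) : Matrix (Fin n) (Fin n) ℝ :=
  Matrix.diagonal fun i => M i i

/-- `F(λ,X) := −λ(log det(Ŝ⁻¹ + λ⁻¹X) + log det Ŝ − δ)`. -/
noncomputable def Fobj {n : ℕ} (S : Matrix (Fin n) (Fin n) ℝ) (δ : ℝ)
    (l : ℝ) (X : Matrix (Fin n) (Fin n) ℝ) : ℝ :=
  -(l * (Real.log ((S⁻¹ + l⁻¹ • X).det) + Real.log S.det - δ))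

/-- The constraint set `C_F`: `λ > 0`, `X` symmetric, `X ⪯ I`, `dd(X) ⪯ 0`,
`Ŝ⁻¹ + λ⁻¹X ≻ 0`. -/
def CF {n : ℕ} (S : Matrix (Fin n) (Fin n) ℝ)
    (l : ℝ) (X : Matrix (Fin n) (Fin n) ℝ) : Prop :=
  0 < l ∧ X.IsSymm ∧ (1 - X).PosSemidef ∧ (-(dd X)).PosSemidef ∧
    (S⁻¹ + l⁻¹ • X).PosDef

open Polynomial Matrix Set Filter Topology

section Pencil

variable {ι R : Type*} [Fintype ι] [DecidableEq ι] [CommRing R]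

noncomputable def pencilDet (M B : Matrix ι ι R) : R[X] :=
  (M.map C + (X : R[X]) • B.map C).det

theorem eval_pencilDet (M B : Matrix ι ι R) (a : R) :
    (pencilDet M B).eval a = (M + a • B).det := by
  rw [pencilDet, Polynomial.eval, ← coe_eval₂RingHom, RingHom.map_det]
  congr 1
  ext i j
  simp [mul_comm a]

end Pencil

section Spectral

open scoped ComplexOrder MatrixOrder

variable {ι 𝕜 : Type*} [Fintype ι] [DecidableEq ι] [RCLike 𝕜]

theorem Matrix.IsHermitian.eq_zero_of_forall_det_one_add_smul {B : Matrix ι ι 𝕜}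
    (hB : B.IsHermitian) (h : ∀ a : 𝕜, (1 + a • B).det = 1) : B = 0 := by
  by_contra hne
  obtain ⟨v, t, ht, hv, hBv⟩ := hB.exists_eigenvector_of_ne_zero hne
  have hker : (1 + (-(t : 𝕜)⁻¹) • B) *ᵥ v = 0 := by
    rw [add_mulVec, one_mulVec, smul_mulVec, hBv, RCLike.real_smul_eq_coe_smul (K := 𝕜), smul_smul,
      neg_mul, inv_mul_cancel₀ (RCLike.ofReal_ne_zero.mpr ht), neg_smul, one_smul, add_neg_cancel]
  exact one_ne_zero ((h _).symm.trans (exists_mulVec_eq_zero_iff.mp ⟨v, hv, hker⟩))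

theorem Matrix.PosDef.eq_zero_of_forall_det_add_smul {M B : Matrix ι ι 𝕜} (hM : M.PosDef)
    (hB : B.IsHermitian) (h : ∀ a : 𝕜, (M + a • B).det = M.det) : B = 0 := by
  set R := CFC.sqrt M
  have hRR : R * R = M := CFC.sqrt_mul_sqrt_self M hM.posSemidef.nonneg
  have hR : R.IsHermitian := (CFC.sqrt_nonneg M).posSemidef.isHermitian
  have hRdet : IsUnit R.det := by
    refine isUnit_iff_ne_zero.mpr fun h0 => hM.det_pos.ne' ?_
    rw [← hRR, det_mul, h0, zero_mul]
  set C := R⁻¹ * B * R⁻¹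
  have hC : C.IsHermitian := by
    simp only [C, IsHermitian, conjTranspose_mul, conjTranspose_nonsing_inv, hR.eq, hB.eq, mul_assoc]
  have hM1 : R⁻¹ * M * R⁻¹ = 1 := by
    rw [← hRR, ← mul_assoc, nonsing_inv_mul _ hRdet, one_mul, mul_nonsing_inv _ hRdet]
  have hconj : ∀ a : 𝕜, R⁻¹ * (M + a • B) * R⁻¹ = 1 + a • C := fun a => by
    rw [mul_add, add_mul, hM1, Matrix.mul_smul, Matrix.smul_mul]
  have hC0 : C = 0 := hC.eq_zero_of_forall_det_one_add_smul fun a => by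
    rw [← hconj, det_mul, det_mul, h, ← det_mul, ← det_mul, hM1, det_one]
  calc B = R * C * R := by
        simp only [C, ← mul_assoc, mul_nonsing_inv _ hRdet, one_mul]
        rw [mul_assoc, nonsing_inv_mul _ hRdet, mul_one]
    _ = 0 := by rw [hC0, mul_zero, zero_mul]

end Spectral

theorem Polynomial.eq_zero_of_X_sq_mul_derivative_eq {R : Type*} [CommRing R] [NoZeroDivisors R]
    {Q : R[X]} {K m : R} (hK : K ≠ 0) (h : X ^ 2 * derivative Q = (C K + C m * X) * Q) :
    Q = 0 := by
  have hcoeff (k : ℕ) : (X * (X * derivative Q)).coeff k = (C K * Q + C m * (X * Q)).coeff k := by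
    rw [← mul_assoc, ← sq, h]
    congr 1
    ring
  ext k
  rw [coeff_zero]
  induction k with
  | zero => simpa [hK] using (hcoeff 0).symm
  | succ k ih =>
    have hXd : (X * derivative Q).coeff k = Q.coeff k * k := by cases k <;> simp [coeff_derivative]
    have := hcoeff (k + 1)
    simp only [coeff_X_mul, coeff_C_mul, coeff_add, hXd, ih] at this
    simpa [hK] using this.symm

theorem Polynomial.sq_mul_eval_derivative_eq_of_log_eval {Q : ℝ[X]} {m K c t : ℝ} (ht : t ≠ 0)
    (hQ : Q.eval t ≠ 0)
    (h : ∀ᶠ s in 𝓝 t, Real.log (Q.eval s) = m * Real.log s - K / s + c) :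
    t ^ 2 * (derivative Q).eval t = (K + m * t) * Q.eval t := by
  have hlogQ : HasDerivAt (fun s => Real.log (Q.eval s)) ((derivative Q).eval t / Q.eval t) t :=
    (Q.hasDerivAt t).log hQ
  have hrhs : HasDerivAt (fun s => m * Real.log s - K / s + c) (m * t⁻¹ + K / t ^ 2) t := by
    refine ((((Real.hasDerivAt_log ht).const_mul m).sub
      ((hasDerivAt_const t K).div (hasDerivAt_id' t) ht)).add_const c).congr_deriv ?_
    ring
  have := hlogQ.unique (hrhs.congr_of_eventuallyEq h)
  field_simp at this
  linear_combination this

theorem Polynomial.eq_zero_of_log_eval_eq_mul_log_sub_div {Q : ℝ[X]} {m K c a b : ℝ} (hab : a < b)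
    (hne : ∀ t ∈ Ioo a b, t ≠ 0 ∧ Q.eval t ≠ 0)
    (h : ∀ t ∈ Ioo a b, Real.log (Q.eval t) = m * Real.log t - K / t + c) : K = 0 := by
  by_contra hK
  have hode : X ^ 2 * derivative Q = (C K + C m * X) * Q := by
    refine eq_of_infinite_eval_eq _ _ ((Ioo_infinite hab).mono fun t ht => ?_)
    simpa using sq_mul_eval_derivative_eq_of_log_eval (hne t ht).1 (hne t ht).2
      (eventually_of_mem (Ioo_mem_nhds ht.1 ht.2) h)
  obtain ⟨t, ht⟩ := nonempty_Ioo.mpr hab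
  exact (hne t ht).2 (by rw [eq_zero_of_X_sq_mul_derivative_eq hK hode, eval_zero])

theorem Polynomial.eq_zero_of_log_eval_eq_along_line {P : ℝ[X]} {l₀ dl m K c ε : ℝ} (hdl : dl ≠ 0)
    (hε : 0 < ε)
    (h : ∀ α, |α| < ε → l₀ + α * dl ≠ 0 ∧ P.eval α ≠ 0 ∧
      Real.log (P.eval α) = m * Real.log (l₀ + α * dl) - K / (l₀ + α * dl) + c) : K = 0 := by
  have hα (t : ℝ) (ht : t ∈ Ioo (l₀ - ε * |dl|) (l₀ + ε * |dl|)) :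
      |dl⁻¹ * (t - l₀)| < ε ∧ l₀ + dl⁻¹ * (t - l₀) * dl = t := by
    refine ⟨?_, by field_simp; ring⟩
    rw [abs_mul, abs_inv, inv_mul_lt_iff₀ (abs_pos.mpr hdl), abs_sub_lt_iff]
    constructor <;> linarith [ht.1, ht.2]
  refine eq_zero_of_log_eval_eq_mul_log_sub_div (Q := P.comp (C dl⁻¹ * (X - C l₀)))
    (m := m) (c := c) (a := l₀ - ε * |dl|) (b := l₀ + ε * |dl|) (by nlinarith [abs_pos.mpr hdl])
    (fun t ht => ?_) (fun t ht => ?_)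
  all_goals
    obtain ⟨hαε, hαt⟩ := hα t ht
    simp only [eval_comp, eval_mul, eval_sub, eval_C, eval_X]
  · simpa only [hαt] using (h _ hαε).imp_right And.left
  · simpa only [hαt] using (h _ hαε).2.2

theorem Matrix.PosDef.eq_zero_of_det_add_smul_eq_of_abs_lt {ι : Type*} [Fintype ι] [DecidableEq ι]
    {M B : Matrix ι ι ℝ} {ε : ℝ} (hM : M.PosDef) (hB : B.IsHermitian) (hε : 0 < ε)
    (h : ∀ α : ℝ, |α| < ε → (M + α • B).det = M.det) : B = 0 := by
  have hconst : pencilDet M B = C M.det :=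
    eq_of_infinite_eval_eq _ _ ((Ioo_infinite (neg_lt_self hε)).mono fun α hα => by
      simp [eval_pencilDet, h α (abs_lt.mpr hα)])
  refine hM.eq_zero_of_forall_det_add_smul hB fun a => ?_
  simpa [eval_pencilDet] using congrArg (eval a) hconst

section Objective

variable {n : ℕ} {S X : Matrix (Fin n) (Fin n) ℝ} {l : ℝ}

theorem posDef_smul_add (hl : 0 < l) (hX : (S⁻¹ + l⁻¹ • X).PosDef) : (l • S⁻¹ + X).PosDef := by
  rw [← smul_inv_smul₀ hl.ne' X, ← smul_add]
  exact hX.smul hl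

theorem log_det_smul_add_of_Fobj_eq {δ K : ℝ} (hl : 0 < l) (hX : (S⁻¹ + l⁻¹ • X).PosDef)
    (hF : Fobj S δ l X = K) :
    Real.log (l • S⁻¹ + X).det = n * Real.log l - K / l + (δ - Real.log S.det) := by
  rw [← smul_inv_smul₀ hl.ne' X, ← smul_add, det_smul, Fintype.card_fin,
    Real.log_mul (pow_ne_zero _ hl.ne') hX.det_pos.ne', Real.log_pow, ← hF, Fobj]
  field_simp
  ring

end Objective

theorem stmt16 {n : ℕ} (S : Matrix (Fin n) (Fin n) ℝ) (δ : ℝ)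
    (l₀ : ℝ) (X₀ : Matrix (Fin n) (Fin n) ℝ)
    (dl : ℝ) (dX : Matrix (Fin n) (Fin n) ℝ) (hdX : dX.IsSymm)
    (hne : ¬(dl = 0 ∧ dX = 0))
    (hconst : ∃ ε > (0 : ℝ), ∀ α : ℝ, |α| < ε →
      0 < l₀ + α * dl ∧
      (S⁻¹ + (l₀ + α * dl)⁻¹ • (X₀ + α • dX)).PosDef ∧
      Fobj S δ (l₀ + α * dl) (X₀ + α • dX) = Fobj S δ l₀ X₀) :
    Fobj S δ l₀ X₀ = 0 := by
  obtain ⟨ε, hε, hline⟩ := hconst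
  set K := Fobj S δ l₀ X₀
  set M := l₀ • S⁻¹ + X₀
  set B := dl • S⁻¹ + dX
  have hpencil (α : ℝ) : (l₀ + α * dl) • S⁻¹ + (X₀ + α • dX) = M + α • B := by module
  have hlog (α : ℝ) (hα : |α| < ε) : 0 < l₀ + α * dl ∧ (M + α • B).PosDef ∧
      Real.log (M + α • B).det
        = n * Real.log (l₀ + α * dl) - K / (l₀ + α * dl) + (δ - Real.log S.det) := by
    obtain ⟨hl, hX, hF⟩ := hline α hα
    rw [← hpencil]
    exact ⟨hl, posDef_smul_add hl hX, log_det_smul_add_of_Fobj_eq hl hX hF⟩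
  have h0 : |(0 : ℝ)| < ε := by simpa using hε
  rcases eq_or_ne dl 0 with rfl | hdl
  · have hM : M.PosDef := by simpa using (hlog 0 h0).2.1
    have hB : B = 0 := by
      refine hM.eq_zero_of_det_add_smul_eq_of_abs_lt (by simpa [B] using hdX) hε fun α hα => ?_
      refine Real.log_injOn_pos (hlog α hα).2.1.det_pos hM.det_pos ?_
      have e := (hlog α hα).2.2
      have e0 := (hlog 0 h0).2.2
      simp only [mul_zero, add_zero, zero_smul] at e e0
      rw [e, e0]
    exact absurd ⟨rfl, by simpa [B] using hB⟩ hne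
  · refine eq_zero_of_log_eval_eq_along_line (P := pencilDet M B) (l₀ := l₀) (m := n)
      (c := δ - Real.log S.det) hdl hε fun α hα => ?_
    obtain ⟨hl, hpos, hlogα⟩ := hlog α hα
    rw [eval_pencilDet]
    exact ⟨hl.ne', hpos.det_pos.ne', hlogα⟩
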